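/- Let L be a decision list of size m in which all indices are useful, sorted so that p_L(j_1) ≥ ... ≥ p_L(j_m), let β ∈ (0, 1/2], and let t ≥ 4·(1/ε)^{4β}·(4/β)^{3w}. Then the total hit probability of all but the t most-hit rules is at most ε: ∑_{k > t} p_L(j_k) ≤ ε. -/

import Mathlib

open Finset
open scoped Classical BigOperators

noncomputable section

/-- A term over `n` Boolean variables, given as a partial assignment:
`C i = some b` means the literal `x i = b` appears in the term. -/
abbrev Term (n : ℕ) := Fin n → Option Bool

/-- Satisfaction of a term by an assignment. -/
def TermSat {n : ℕ} (C : Term n) (x : Fin n → Bool) : Prop :=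
  ∀ i b, C i = some b → x i = b

/-- Width of a term: the number of variables it mentions. -/
def termWidth {n : ℕ} (C : Term n) : ℕ :=
  (Finset.univ.filter fun i => C i ≠ none).card

/-- The index function of a decision list with terms `C`:
the first index whose term is satisfied by `x` (and `m` conventionally if none,
since `sInf ∅ = 0`; the default rule hypothesis makes the set nonempty). -/
def DLind {n m : ℕ} (C : Fin m → Term n) (x : Fin n → Bool) : ℕ :=
  sInf {i : ℕ | ∃ h : i < m, TermSat (C ⟨i, h⟩) x}

/-- Evaluation of a decision list with terms `C` and values `v`. -/
def DLeval {n m : ℕ} {V : Type} [Inhabited V] (C : Fin m → Term n)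
    (v : Fin m → V) (x : Fin n → Bool) : V :=
  if h : DLind C x < m then v ⟨DLind C x, h⟩ else default

/-- Probability of an event under the uniform distribution on `{0,1}^n`. -/
def pr (n : ℕ) (P : (Fin n → Bool) → Prop) : ℝ :=
  ((Finset.univ.filter P).card : ℝ) / 2 ^ n

/-- Hit probability of index `i` in the decision list with terms `C`. -/
def pL {n m : ℕ} (C : Fin m → Term n) (i : ℕ) : ℝ :=
  pr n fun x => DLind C x = i

/-- The index function of the sub-decision-list `L|_J`. -/
def DLindSub {n m : ℕ} (C : Fin m → Term n) (J : Finset (Fin m)) (x : Fin n → Bool) : ℕ :=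
  sInf {i : ℕ | ∃ h : i < m, (⟨i, h⟩ : Fin m) ∈ J ∧ TermSat (C ⟨i, h⟩) x}

/-- Evaluation of the sub-decision-list `L|_J`. -/
def DLevalSub {n m : ℕ} {V : Type} [Inhabited V] (C : Fin m → Term n) (v : Fin m → V)
    (J : Finset (Fin m)) (x : Fin n → Bool) : V :=
  if h : DLindSub C J x < m then v ⟨DLindSub C J x, h⟩ else default

/-- A restriction: `some b` fixes a coordinate to `b`, `none` is a star. -/
abbrev Restriction (n : ℕ) := Fin n → Option Bool

/-- `x` is a completion of the restriction `ρ`. -/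
def Compatible {n : ℕ} (ρ : Restriction n) (x : Fin n → Bool) : Prop :=
  ∀ i b, ρ i = some b → x i = b

/-- Number of stars of a restriction. -/
def stars {n : ℕ} (ρ : Restriction n) : ℕ :=
  (Finset.univ.filter fun i => ρ i = none).card

/-- Weight of a restriction under the product distribution `U(n, α)`:
each coordinate independently `*` with probability `α`, and `0` or `1`
each with probability `(1-α)/2`. -/
def restW {n : ℕ} (α : ℝ) (ρ : Restriction n) : ℝ :=
  ∏ i : Fin n, if ρ i = none then α else (1 - α) / 2

/-- Index `i` is useful in the restricted decision list `L↾ρ`: some completion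
of `ρ` hits rule `i`. -/
def Useful {n m : ℕ} (C : Fin m → Term n) (ρ : Restriction n) (i : Fin m) : Prop :=
  ∃ x, Compatible ρ x ∧ DLind C x = i.val

/-- Number of useful indices of `L↾ρ`. -/
def useNum {n m : ℕ} (C : Fin m → Term n) (ρ : Restriction n) : ℕ :=
  (Finset.univ.filter fun i : Fin m => Useful C ρ i).card

/-- `q_L(α, i)`: probability over `ρ ~ U(n, α)` that index `i` is useful in `L↾ρ`. -/
def qL {n m : ℕ} (C : Fin m → Term n) (α : ℝ) (i : Fin m) : ℝ :=
  ∑ ρ : Restriction n, restW α ρ * (if Useful C ρ i then 1 else 0)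

/-- Transition weight of the `β`-noise on a single bit. -/
def noiseW (β : ℝ) (a b : Bool) : ℝ := if a = b then (1 + β) / 2 else (1 - β) / 2

/-- Joint density of `(x, y)` where `x` is uniform and `y ~ N_β(x)`. -/
def pairW {n : ℕ} (β : ℝ) (x y : Fin n → Bool) : ℝ :=
  (1 / 2) ^ n * ∏ i : Fin n, noiseW β (x i) (y i)

/-- `Stab_L(β, i) = Pr[Ind L(x) = Ind L(y) = i]` for `x` uniform, `y ~ N_β(x)`. -/
def StabInd {n m : ℕ} (C : Fin m → Term n) (β : ℝ) (i : Fin m) : ℝ :=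
  ∑ x : Fin n → Bool, ∑ y : Fin n → Bool,
    pairW β x y * (if DLind C x = i.val ∧ DLind C y = i.val then 1 else 0)

/-- `Stab_β(g) = Pr[g(x) = g(y) = 1]` for `x` uniform, `y ~ N_β(x)`. -/
def stab {n : ℕ} (β : ℝ) (g : (Fin n → Bool) → Bool) : ℝ :=
  ∑ x : Fin n → Bool, ∑ y : Fin n → Bool,
    pairW β x y * (if g x = true ∧ g y = true then 1 else 0)

/-- Probability weight that a uniform completion of `ρ` equals `x`. -/
def compW {n : ℕ} (ρ : Restriction n) (x : Fin n → Bool) : ℝ :=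
  if Compatible ρ x then (1 / 2) ^ stars ρ else 0

/-- Evaluation of a DNF with terms `T`. -/
def DNFeval {n M : ℕ} (T : Fin M → Term n) (x : Fin n → Bool) : Prop :=
  ∃ t, TermSat (T t) x

/-!
Put `θ = 2β/(1+β)`. First, `p_L(i)^θ ≤ q_L(1-β, i)`, by induction on the number of stars of a
restriction `σ`. Let `P(σ)` be the probability that a uniform completion of `σ` hits rule `i`,
and `Q(σ)` the probability that `i` is useful after each star of `σ` is independently kept with
probability `1-β` and otherwise fixed to a uniform bit. For a star `v`, `P(σ)` is the average of
`P(σ[v := 0])` and `P(σ[v := 1])`, while `Q(σ) ≥ (1-β) Q(σ[v := b]) + β/2 (Q(σ[v := 0]) +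
Q(σ[v := 1]))` for each `b`, because fixing a star can only destroy usefulness. Concavity of
`t ↦ t^θ` carries `P^θ ≤ Q` from total restrictions up to the empty one, where `P = p_L(i)` and
`Q = q_L(1-β, i)`.

Second, `∑ᵢ q_L(1-β, i) ≤ (4/β)^w`, by an encoding: extend a restriction `ρ` that makes `i`
useful by the literals of the `i`-th term. Rule `i` is the first term forced by the extension,
`ρ` is recovered from the extension and the set `S` of newly fixed variables, and the weight of
`ρ` is `(2(1-β)/β)^|S|` times that of its extension. Summing over the subsets `S` of the at most
`w` variables of a term gives the factor `((2-β)/β)^w ≤ (4/β)^w`.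

Hence the `k`-th largest hit probability is at most `((4/β)^w / k)^{1/θ}`; the tail beyond `t`
is bounded by an integral of `x^{-1/θ}`, and the choice of `t` makes it at most `ε`.
-/

theorem half_add_rpow_le {β θ a b : ℝ} (hβ : 0 < β) (hβθ : β ≤ θ) (hθ : θ ≤ 1)
    (hb : 0 ≤ b) (hba : b ≤ a) :
    ((a + b) / 2) ^ θ ≤ (1 - β / 2) * a ^ θ + β / 2 * b ^ θ := by
  have hθ0 : 0 < θ := hβ.trans_le hβθ
  rcases (hb.trans hba).eq_or_lt with rfl | ha
  · obtain rfl : b = 0 := le_antisymm hba hb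
    simp [Real.zero_rpow hθ0.ne']
  set t := b / a
  have ht0 : 0 ≤ t := div_nonneg hb ha.le
  have ht1 : t ≤ 1 := div_le_one_of_le₀ hba ha.le
  have hbern : (1 + (t - 1) / 2) ^ θ ≤ 1 + θ * ((t - 1) / 2) :=
    rpow_one_add_le_one_add_mul_self (by linarith) hθ0.le hθ
  have hself : t ≤ t ^ θ := Real.self_le_rpow_of_le_one ht0 ht1 hθ
  have hkey : (1 + (t - 1) / 2) ^ θ ≤ 1 - β / 2 + β / 2 * t ^ θ := by
    nlinarith [mul_nonneg (sub_nonneg.2 hβθ) (sub_nonneg.2 ht1)]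
  have hb' : b = a * t := (mul_div_cancel₀ b ha.ne').symm
  have hab : (a + b) / 2 = a * (1 + (t - 1) / 2) := by rw [hb']; ring
  rw [hab, hb', Real.mul_rpow ha.le (by linarith), Real.mul_rpow ha.le ht0]
  nlinarith [Real.rpow_nonneg ha.le θ]

theorem half_add_rpow_le_of_split {β θ P₀ P₁ Q A Q₀ Q₁ : ℝ} (hβ : 0 < β) (hβθ : β ≤ θ)
    (hθ : θ ≤ 1) (hP₀ : 0 ≤ P₀) (hP₁ : 0 ≤ P₁) (h₀ : P₀ ^ θ ≤ Q₀) (h₁ : P₁ ^ θ ≤ Q₁)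
    (hQ : Q = (1 - β) * A + β / 2 * (Q₀ + Q₁)) (hA₀ : Q₀ ≤ A) (hA₁ : Q₁ ≤ A) :
    ((P₀ + P₁) / 2) ^ θ ≤ Q := by
  wlog hP : P₀ ≤ P₁ generalizing P₀ P₁ Q₀ Q₁
  · rw [add_comm P₀, add_comm Q₀] at *
    exact this hP₁ hP₀ h₁ h₀ hQ hA₁ hA₀ (le_of_not_ge hP)
  have hβ1 : β ≤ 1 := hβθ.trans hθ
  calc ((P₀ + P₁) / 2) ^ θ ≤ (1 - β / 2) * P₁ ^ θ + β / 2 * P₀ ^ θ := by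
        rw [add_comm]; exact half_add_rpow_le hβ hβθ hθ hP₀ hP
    _ = (1 - β) * P₁ ^ θ + β / 2 * (P₀ ^ θ + P₁ ^ θ) := by ring
    _ ≤ (1 - β) * A + β / 2 * (Q₀ + Q₁) := by gcongr; linarith
    _ = Q := hQ.symm

theorem sum_Ico_add_one_rpow_neg_le {c : ℝ} (hc : 1 < c) {t : ℕ} (ht : 0 < t) (M : ℕ) :
    ∑ u ∈ Ico t M, ((u : ℝ) + 1) ^ (-c) ≤ (t : ℝ) ^ (1 - c) / (c - 1) := by
  have htR : (0 : ℝ) < t := by exact_mod_cast ht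
  rcases le_or_gt t M with htM | hMt
  swap
  · rw [Ico_eq_empty_of_le hMt.le, sum_empty]
    exact div_nonneg (Real.rpow_nonneg htR.le _) (by linarith)
  have hzero : (0 : ℝ) ∉ Set.uIcc (t : ℝ) M := by
    rw [Set.uIcc_of_le (by exact_mod_cast htM)]
    exact fun h => htR.not_ge h.1
  have hanti : AntitoneOn (fun x : ℝ => x ^ (-c)) (Set.Icc (t : ℝ) M) :=
    fun x hx y _ hxy => Real.rpow_le_rpow_of_nonpos (htR.trans_le hx.1) hxy (by linarith)
  calc ∑ u ∈ Ico t M, ((u : ℝ) + 1) ^ (-c)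
      ≤ ∫ x in (t : ℝ)..M, x ^ (-c) := by
        simpa using hanti.sum_le_integral_Ico htM
    _ = ((t : ℝ) ^ (1 - c) - (M : ℝ) ^ (1 - c)) / (c - 1) := by
        rw [integral_rpow (Or.inr ⟨by linarith, hzero⟩), ← neg_div_neg_eq]
        ring_nf
    _ ≤ (t : ℝ) ^ (1 - c) / (c - 1) := by
        gcongr ?_ / _
        exact sub_le_self _ (Real.rpow_nonneg (Nat.cast_nonneg M) _)

theorem succ_mul_le_sum_of_antitone {m : ℕ} {a : Fin m → ℝ} (ha : Antitone a)
    (h0 : ∀ i, 0 ≤ a i) (k : Fin m) : ((k : ℝ) + 1) * a k ≤ ∑ i, a i :=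
  calc ((k : ℝ) + 1) * a k = ∑ _i ∈ Iic k, a k := by simp [Fin.card_Iic]
    _ ≤ ∑ i ∈ Iic k, a i := sum_le_sum fun i hi => ha (mem_Iic.1 hi)
    _ ≤ ∑ i, a i := sum_le_sum_of_subset_of_nonneg (subset_univ _) fun i _ _ => h0 i

theorem sum_tail_le_of_sum_rpow_le {m t : ℕ} {a : Fin m → ℝ} {B c : ℝ} (hc : 1 < c)
    (ht : 0 < t) (ha : Antitone a) (h0 : ∀ i, 0 ≤ a i) (hB : ∑ i, a i ^ c⁻¹ ≤ B) :
    ∑ k ∈ univ.filter (fun k : Fin m => t ≤ k.val), a k ≤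
      B ^ c * ((t : ℝ) ^ (1 - c) / (c - 1)) := by
  have hc0 : 0 < c := by linarith
  have hB0 : 0 ≤ B := (sum_nonneg fun i _ => Real.rpow_nonneg (h0 i) _).trans hB
  have hpoint : ∀ k : Fin m, a k ≤ B ^ c * ((k : ℝ) + 1) ^ (-c) := by
    intro k
    have hk : (0 : ℝ) < (k : ℝ) + 1 := by positivity
    have hroot : a k ^ c⁻¹ ≤ B / ((k : ℝ) + 1) := by
      rw [le_div_iff₀' hk]
      exact (succ_mul_le_sum_of_antitone
        (fun i j hij => Real.rpow_le_rpow (h0 j) (ha hij) (inv_nonneg.2 hc0.le))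
        (fun i => Real.rpow_nonneg (h0 i) _) k).trans hB
    calc a k = (a k ^ c⁻¹) ^ c := (Real.rpow_inv_rpow (h0 k) hc0.ne').symm
      _ ≤ (B / ((k : ℝ) + 1)) ^ c := Real.rpow_le_rpow (Real.rpow_nonneg (h0 k) _) hroot hc0.le
      _ = B ^ c * ((k : ℝ) + 1) ^ (-c) := by
        rw [Real.div_rpow hB0 hk.le, Real.rpow_neg hk.le, div_eq_mul_inv]
  calc ∑ k ∈ univ.filter (fun k : Fin m => t ≤ k.val), a k
      ≤ ∑ k ∈ univ.filter (fun k : Fin m => t ≤ k.val), B ^ c * ((k : ℝ) + 1) ^ (-c) :=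
        sum_le_sum fun k _ => hpoint k
    _ = B ^ c * ∑ u ∈ Ico t m, ((u : ℝ) + 1) ^ (-c) := by
        rw [← mul_sum, sum_filter, Fin.sum_univ_eq_sum_range
          (fun u => if t ≤ u then ((u : ℝ) + 1) ^ (-c) else 0), ← sum_filter, range_eq_Ico,
          Ico_filter_le, Nat.zero_max]
    _ ≤ B ^ c * ((t : ℝ) ^ (1 - c) / (c - 1)) :=
        mul_le_mul_of_nonneg_left (sum_Ico_add_one_rpow_neg_le hc ht m)
          (Real.rpow_nonneg hB0 c)

theorem rpow_mul_tail_le_of_threshold {β ε c : ℝ} {w t : ℕ} (hβ : 0 < β) (hβ2 : β ≤ 1 / 2)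
    (hε : 0 < ε) (hε1 : ε ≤ 1) (hc : c = (1 + β) / (2 * β))
    (ht : 4 * (1 / ε) ^ (4 * β) * (4 / β) ^ (3 * w) ≤ (t : ℝ)) :
    ((4 / β) ^ w) ^ c * ((t : ℝ) ^ (1 - c) / (c - 1)) ≤ ε := by
  have hc32 : 3 / 2 ≤ c := by rw [hc, le_div_iff₀ (by positivity)]; linarith
  have hβc : 4 * β * (1 - c) = -2 * (1 - β) := by rw [hc]; field_simp; ring
  set X : ℝ := 4 / β
  have hX : 1 ≤ X := by rw [le_div_iff₀ hβ]; linarith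
  have hε' : 1 ≤ 1 / ε := by rw [le_div_iff₀ hε]; linarith
  have hT₀ : 0 < 4 * (1 / ε) ^ (4 * β) * X ^ (3 * w) := by positivity
  have hX_part : (X ^ w) ^ c * (X ^ (3 * w)) ^ (1 - c) ≤ 1 := by
    rw [← Real.rpow_natCast, ← Real.rpow_natCast, ← Real.rpow_mul (by positivity),
      ← Real.rpow_mul (by positivity), ← Real.rpow_add (by positivity)]
    apply Real.rpow_le_one_of_one_le_of_nonpos hX
    push_cast
    nlinarith [(Nat.cast_nonneg w : (0 : ℝ) ≤ w)]
  have hε_part : ((1 / ε) ^ (4 * β)) ^ (1 - c) ≤ ε := by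
    rw [← Real.rpow_mul (by positivity), hβc]
    calc (1 / ε) ^ (-2 * (1 - β)) ≤ (1 / ε) ^ (-1 : ℝ) :=
          Real.rpow_le_rpow_of_exponent_le hε' (by linarith)
      _ = ε := by rw [Real.rpow_neg_one, one_div, inv_inv]
  have h4_part : (4 : ℝ) ^ (1 - c) / (c - 1) ≤ 1 := by
    rw [div_le_one (by linarith : (0 : ℝ) < c - 1)]
    calc (4 : ℝ) ^ (1 - c) ≤ 4 ^ (-1 / 2 : ℝ) :=
          Real.rpow_le_rpow_of_exponent_le (by norm_num) (by linarith)
      _ = 1 / 2 := by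
        rw [show (4 : ℝ) = 2 ^ (2 : ℝ) by norm_num, ← Real.rpow_mul (by norm_num)]
        norm_num
      _ ≤ c - 1 := by linarith
  calc (X ^ w) ^ c * ((t : ℝ) ^ (1 - c) / (c - 1))
      ≤ (X ^ w) ^ c * ((4 * (1 / ε) ^ (4 * β) * X ^ (3 * w)) ^ (1 - c) / (c - 1)) := by
        gcongr _ * (?_ / _)
        · linarith
        · exact Real.rpow_le_rpow_of_nonpos hT₀ ht (by linarith)
    _ = ((X ^ w) ^ c * (X ^ (3 * w)) ^ (1 - c)) * (4 ^ (1 - c) / (c - 1)) *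
          ((1 / ε) ^ (4 * β)) ^ (1 - c) := by
        rw [Real.mul_rpow (by positivity) (by positivity),
          Real.mul_rpow (by positivity) (by positivity)]
        ring
    _ ≤ 1 * 1 * ε := by
        gcongr
        exact div_nonneg (by positivity) (by linarith)
    _ = ε := by ring

theorem termSat_of_DLind_eq {n m : ℕ} {C : Fin m → Term n} {x : Fin n → Bool} {i : Fin m}
    (htot : ∃ k, TermSat (C k) x) (h : DLind C x = i) : TermSat (C i) x := by
  obtain ⟨k, hk⟩ := htot
  obtain ⟨hi, hsat⟩ : DLind C x ∈ {i : ℕ | ∃ h : i < m, TermSat (C ⟨i, h⟩) x} :=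
    Nat.sInf_mem ⟨k, k.isLt, hk⟩
  simpa [h] using hsat

theorem not_termSat_of_lt_DLind {n m : ℕ} {C : Fin m → Term n} {x : Fin n → Bool} {j : Fin m}
    (hj : (j : ℕ) < DLind C x) : ¬ TermSat (C j) x :=
  fun hsat => Nat.notMem_of_lt_sInf hj ⟨j.isLt, hsat⟩

theorem pr_le_one (n : ℕ) (P : (Fin n → Bool) → Prop) : pr n P ≤ 1 := by
  unfold pr
  rw [div_le_one (by positivity)]
  exact_mod_cast (card_le_univ _).trans (by simp)

theorem pL_nonneg {n m : ℕ} (C : Fin m → Term n) (i : ℕ) : 0 ≤ pL C i := by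
  unfold pL pr
  positivity

theorem sum_pL_le_one {n m : ℕ} (C : Fin m → Term n) : ∑ i : Fin m, pL C i ≤ 1 :=
  calc ∑ i : Fin m, pL C i = pr n (fun x => DLind C x ∈ range m) := by
        rw [Fin.sum_univ_eq_sum_range (fun i => pL C i)]
        unfold pL pr
        rw [← sum_div]
        congr 1
        exact_mod_cast (by convert sum_card_fiberwise_eq_card_filter univ (range m) (DLind C))
    _ ≤ 1 := pr_le_one n _

theorem stars_update_lt {n : ℕ} {σ : Restriction n} {v : Fin n} (hv : σ v = none) (b : Bool) :
    stars (Function.update σ v (some b)) < stars σ := by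
  refine card_lt_card ((ssubset_iff_of_subset fun u hu => ?_).2 ⟨v, by simp [hv], by simp⟩)
  by_cases huv : u = v
  · simp_all
  · simpa [huv] using hu

section Fill

variable {n : ℕ} {α : Type*}

/-- `fillSum (fixKernel ι μ) σ f` is the expectation of `f` when every star of `σ` is filled
independently with law `μ` and every fixed bit `b` of `σ` becomes `ι b`. -/
def fixKernel (ι : Bool → α) (μ : α → ℝ) : Option Bool → α → ℝ
  | none, a => μ a
  | some b, a => if a = ι b then 1 else 0

theorem fixKernel_nonneg {ι : Bool → α} {μ : α → ℝ} (hμ : ∀ a, 0 ≤ μ a) (s : Option Bool)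
    (a : α) :
    0 ≤ fixKernel ι μ s a := by
  cases s with
  | none => exact hμ a
  | some b => simp only [fixKernel]; split_ifs <;> norm_num

variable [Fintype α]

def fillSum (K : Option Bool → α → ℝ) (σ : Restriction n) (f : (Fin n → α) → ℝ) : ℝ :=
  ∑ x, (∏ v, K (σ v) (x v)) * f x

def fillSumAt (K : Option Bool → α → ℝ) (σ : Restriction n) (v : Fin n) (a : α)
    (f : (Fin n → α) → ℝ) : ℝ :=
  ∑ x ∈ univ.filter (fun x : Fin n → α => x v = a), (∏ u ∈ univ.erase v, K (σ u) (x u)) * f x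

variable {K : Option Bool → α → ℝ} {σ : Restriction n} {f g : (Fin n → α) → ℝ}

theorem fillSum_eq_sum_fillSumAt (v : Fin n) :
    fillSum K σ f = ∑ a, K (σ v) a * fillSumAt K σ v a f := by
  unfold fillSum fillSumAt
  simp_rw [mul_sum]
  rw [← sum_fiberwise univ (fun x => x v)]
  refine sum_congr rfl fun a _ => sum_congr rfl fun x hx => ?_
  rw [← mul_prod_erase univ _ (mem_univ v), (mem_filter.1 hx).2, mul_assoc]

theorem fillSumAt_update (v : Fin n) (s : Option Bool) (a : α) :
    fillSumAt K (Function.update σ v s) v a f = fillSumAt K σ v a f :=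
  sum_congr rfl fun x _ => congrArg (· * f x) <| prod_congr rfl fun u hu => by
    rw [Function.update_of_ne (ne_of_mem_erase hu)]

theorem fillSumAt_eq_fillSumAt_update (v : Fin n) (a a' : α) :
    fillSumAt K σ v a f = fillSumAt K σ v a' (fun x => f (Function.update x v a)) := by
  unfold fillSumAt
  refine sum_nbij' (Function.update · v a') (Function.update · v a) ?_ ?_ ?_ ?_ ?_
  all_goals simp only [mem_filter, mem_univ, true_and]
  · simp
  · simp
  · intro x hx; simp [← hx]
  · intro x hx; simp [← hx]
  · intro x hx
    have hxa : Function.update x v a = x := Function.update_eq_self_iff.2 hx.symm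
    rw [Function.update_idem, hxa]
    exact congrArg (· * f x) <| prod_congr rfl fun u hu => by
      rw [Function.update_of_ne (ne_of_mem_erase hu)]

theorem fillSumAt_mono (hK : ∀ s a, 0 ≤ K s a) {v : Fin n} {a : α}
    (hfg : ∀ x, x v = a → f x ≤ g x) : fillSumAt K σ v a f ≤ fillSumAt K σ v a g :=
  sum_le_sum fun x hx => mul_le_mul_of_nonneg_left (hfg x (mem_filter.1 hx).2)
    (prod_nonneg fun _ _ => hK _ _)

variable {ι : Bool → α} {μ : α → ℝ}

theorem fillSum_fixKernel_of_eq_none {v : Fin n} (hv : σ v = none) :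
    fillSum (fixKernel ι μ) σ f = ∑ a, μ a * fillSumAt (fixKernel ι μ) σ v a f := by
  rw [fillSum_eq_sum_fillSumAt v, hv]
  rfl

theorem fillSum_fixKernel_update (v : Fin n) (b : Bool) :
    fillSum (fixKernel ι μ) (Function.update σ v (some b)) f =
      fillSumAt (fixKernel ι μ) σ v (ι b) f := by
  simp [fillSum_eq_sum_fillSumAt v, fillSumAt_update, fixKernel]

theorem fillSum_fixKernel_some (x₀ : Fin n → Bool) :
    fillSum (fixKernel ι μ) (fun v => some (x₀ v)) f = f fun v => ι (x₀ v) := by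
  simp [fillSum, fixKernel, prod_boole, ← funext_iff]

end Fill

section CompletionUseful

variable {n m : ℕ} (C : Fin m → Term n) (i : Fin m)

def completionProb (σ : Restriction n) : ℝ :=
  fillSum (fixKernel id fun _ => 1 / 2) σ fun x => if DLind C x = i then 1 else 0

def usefulProb (α : ℝ) (σ : Restriction n) : ℝ :=
  fillSum (fixKernel some fun o => if o = none then α else (1 - α) / 2) σ
    fun ρ => if Useful C ρ i then 1 else 0

theorem completionProb_none : completionProb C i (fun _ => none) = pL C i := by
  simp [completionProb, fillSum, fixKernel, pL, pr, div_eq_mul_inv, sum_ite]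
  congr

theorem usefulProb_none (α : ℝ) : usefulProb C i α (fun _ => none) = qL C α i :=
  rfl

variable {C i}

theorem Useful.of_update {ρ : Restriction n} {v : Fin n} (hv : ρ v = none) {b : Bool}
    (h : Useful C (Function.update ρ v (some b)) i) : Useful C ρ i := by
  obtain ⟨x, hx, hi⟩ := h
  refine ⟨x, fun u c hu => hx u c ?_, hi⟩
  rwa [Function.update_of_ne (by rintro rfl; simp [hv] at hu)]

theorem useful_some_iff (x₀ : Fin n → Bool) :
    Useful C (fun v => some (x₀ v)) i ↔ DLind C x₀ = i := by
  constructor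
  · rintro ⟨x, hx, hi⟩
    obtain rfl : x = x₀ := funext fun v => hx v _ rfl
    exact hi
  · exact fun h => ⟨x₀, fun v b hv => Option.some_injective _ hv, h⟩

variable {σ : Restriction n} {v : Fin n}

theorem completionProb_split (hv : σ v = none) :
    completionProb C i σ = (completionProb C i (Function.update σ v (some false)) +
      completionProb C i (Function.update σ v (some true))) / 2 := by
  simp only [completionProb, fillSum_fixKernel_of_eq_none hv, fillSum_fixKernel_update,
    Fintype.sum_bool, id]
  ring

theorem exists_usefulProb_split {α : ℝ} (hα0 : 0 ≤ α) (hα1 : α ≤ 1) (hv : σ v = none) :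
    ∃ A, usefulProb C i α σ = α * A + (1 - α) / 2 *
        (usefulProb C i α (Function.update σ v (some false)) +
          usefulProb C i α (Function.update σ v (some true))) ∧
      ∀ b, usefulProb C i α (Function.update σ v (some b)) ≤ A := by
  -- `A` is the weight of the refinements in which `v` stays a star.
  refine ⟨fillSumAt (fixKernel some fun o => if o = none then α else (1 - α) / 2) σ v none
    fun ρ => if Useful C ρ i then 1 else 0, ?_, fun b => ?_⟩
  · simp only [usefulProb, fillSum_fixKernel_of_eq_none hv, fillSum_fixKernel_update,
      Fintype.sum_option, Fintype.sum_bool]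
    simp only [if_true, reduceCtorEq, if_false]
    ring
  · rw [usefulProb, fillSum_fixKernel_update, fillSumAt_eq_fillSumAt_update v _ none]
    refine fillSumAt_mono (fixKernel_nonneg fun o => ?_) fun ρ hρ => ?_
    · split_ifs <;> linarith
    · by_cases h : Useful C (Function.update ρ v (some b)) i
      · simp [h, h.of_update hρ]
      · simp only [h, if_false]
        split_ifs <;> norm_num

theorem completionProb_some (x₀ : Fin n → Bool) :
    completionProb C i (fun v => some (x₀ v)) = if DLind C x₀ = i then 1 else 0 :=
  fillSum_fixKernel_some x₀

theorem usefulProb_some (α : ℝ) (x₀ : Fin n → Bool) :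
    usefulProb C i α (fun v => some (x₀ v)) = if DLind C x₀ = i then 1 else 0 := by
  simp only [usefulProb, fillSum_fixKernel_some, useful_some_iff]

theorem completionProb_nonneg (σ : Restriction n) : 0 ≤ completionProb C i σ :=
  sum_nonneg fun x _ => mul_nonneg (prod_nonneg fun v _ => fixKernel_nonneg (by norm_num) _ _)
    (ite_nonneg zero_le_one le_rfl)

theorem completionProb_rpow_le_usefulProb {β : ℝ} (hβ : 0 < β) (hβ1 : β ≤ 1)
    (σ : Restriction n) :
    completionProb C i σ ^ (2 * β / (1 + β)) ≤ usefulProb C i (1 - β) σ := by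
  by_cases hstar : ∃ v, σ v = none
  · obtain ⟨v, hv⟩ := hstar
    have ih (b : Bool) := completionProb_rpow_le_usefulProb hβ hβ1 (Function.update σ v (some b))
    obtain ⟨A, hA, hle⟩ := exists_usefulProb_split (α := 1 - β) (by linarith) (by linarith) hv
    rw [completionProb_split hv]
    exact half_add_rpow_le_of_split hβ (by rw [le_div_iff₀ (by linarith)]; nlinarith)
      (by rw [div_le_one (by linarith)]; linarith) (completionProb_nonneg _)
      (completionProb_nonneg _) (ih false) (ih true) (by rw [hA]; ring) (hle false) (hle true)
  · push Not at hstar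
    obtain ⟨x₀, rfl⟩ : ∃ x₀ : Fin n → Bool, σ = fun v => some (x₀ v) :=
      ⟨fun v => (σ v).getD false, funext fun v => by
        cases hσ : σ v <;> simp_all⟩
    rw [completionProb_some, usefulProb_some]
    split_ifs
    · simp
    · simp [Real.zero_rpow (by positivity : 2 * β / (1 + β) ≠ 0)]
termination_by stars σ
decreasing_by exact stars_update_lt hv b

theorem pL_rpow_le_qL {β : ℝ} (hβ : 0 < β) (hβ1 : β ≤ 1) (C : Fin m → Term n) (i : Fin m) :
    pL C i ^ (2 * β / (1 + β)) ≤ qL C (1 - β) i := by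
  simpa [completionProb_none, usefulProb_none] using
    completionProb_rpow_le_usefulProb (C := C) (i := i) hβ hβ1 (fun _ => none)

end CompletionUseful

section Encoding

variable {n m : ℕ}

def Forces (ρ : Restriction n) (T : Term n) : Prop :=
  ∀ v b, T v = some b → ρ v = some b

def IsFirstForced (C : Fin m → Term n) (ρ : Restriction n) (i : Fin m) : Prop :=
  Forces ρ (C i) ∧ ∀ j < i, ¬ Forces ρ (C j)

def extendBy (ρ : Restriction n) (T : Term n) : Restriction n :=
  fun v => (ρ v).or (T v)

def newVars (ρ : Restriction n) (T : Term n) : Finset (Fin n) :=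
  univ.filter fun v => ρ v = none ∧ T v ≠ none

variable {ρ : Restriction n} {T : Term n} {x : Fin n → Bool}

theorem termSat_of_forces (hρx : Compatible ρ x) (h : Forces ρ T) : TermSat T x :=
  fun v b hv => hρx v b (h v b hv)

theorem compatible_extendBy (hρx : Compatible ρ x) (hT : TermSat T x) :
    Compatible (extendBy ρ T) x := by
  intro v b hv
  cases hρ : ρ v with
  | none => exact hT v b (by simpa [extendBy, hρ] using hv)
  | some c => exact hρx v b (by simpa [extendBy, hρ] using hv)

theorem forces_extendBy (hρx : Compatible ρ x) (hT : TermSat T x) :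
    Forces (extendBy ρ T) T := by
  intro v b hv
  cases hρ : ρ v with
  | none => simp [extendBy, hρ, hv]
  | some c => simp [extendBy, hρ, ← hρx v c hρ, hT v b hv]

theorem extendBy_of_notMem_newVars {v : Fin n} (hv : v ∉ newVars ρ T) :
    extendBy ρ T v = ρ v := by
  cases hρ : ρ v <;> simp_all [newVars, extendBy]

theorem newVars_subset : newVars ρ T ⊆ univ.filter fun v => T v ≠ none :=
  fun v hv => by simp_all [newVars]

theorem extendBy_newVars_injective (T : Term n) :
    Function.Injective fun ρ : Restriction n => (extendBy ρ T, newVars ρ T) := by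
  intro ρ ρ' h
  obtain ⟨hext, hnew⟩ := Prod.mk.inj h
  funext v
  by_cases hv : v ∈ newVars ρ T
  · have hv' := hnew ▸ hv
    simp only [newVars, mem_filter, mem_univ, true_and] at hv hv'
    rw [hv.1, hv'.1]
  · have hv' : v ∉ newVars ρ' T := hnew ▸ hv
    rw [← extendBy_of_notMem_newVars hv, ← extendBy_of_notMem_newVars hv', hext]

theorem Useful.isFirstForced {C : Fin m → Term n} {i : Fin m}
    (htot : ∀ x, ∃ k, TermSat (C k) x) (h : Useful C ρ i) :
    IsFirstForced C (extendBy ρ (C i)) i := by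
  obtain ⟨x, hx, hi⟩ := h
  have hsat := termSat_of_DLind_eq (htot x) hi
  exact ⟨forces_extendBy hx hsat, fun j hj hforce => not_termSat_of_lt_DLind
    (hi ▸ Fin.lt_def.1 hj) (termSat_of_forces (compatible_extendBy hx hsat) hforce)⟩

theorem restW_nonneg {α : ℝ} (hα0 : 0 ≤ α) (hα1 : α ≤ 1) (ρ : Restriction n) :
    0 ≤ restW α ρ :=
  prod_nonneg fun v _ => by split_ifs <;> linarith

theorem sum_restW (α : ℝ) : ∑ ρ : Restriction n, restW α ρ = 1 := by
  simp only [restW]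
  rw [← Fintype.prod_sum (ι := Fin n) fun _ (o : Option Bool) =>
    if o = none then α else (1 - α) / 2]
  simp only [Fintype.sum_option, Fintype.sum_bool, if_true, reduceCtorEq, if_false]
  exact prod_eq_one fun _ _ => by ring

theorem restW_eq_mul_restW_extendBy {α : ℝ} (hα : α ≠ 1) (ρ : Restriction n) (T : Term n) :
    restW α ρ = (2 * α / (1 - α)) ^ (newVars ρ T).card * restW α (extendBy ρ T) := by
  have hα' : 1 - α ≠ 0 := sub_ne_zero.2 hα.symm
  have hfactor : ∀ v, (if ρ v = none then α else (1 - α) / 2) =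
      (if v ∈ newVars ρ T then 2 * α / (1 - α) else 1) *
        (if extendBy ρ T v = none then α else (1 - α) / 2) := by
    intro v
    cases hρ : ρ v <;> cases hT : T v <;> simp [newVars, extendBy, hρ, hT]
    field_simp
  rw [restW, prod_congr rfl fun v _ => hfactor v, prod_mul_distrib, prod_ite_mem, univ_inter,
    prod_const, restW]

theorem sum_restW_useful_le {α : ℝ} (hα0 : 0 ≤ α) (hα1 : α < 1) {C : Fin m → Term n}
    (htot : ∀ x, ∃ k, TermSat (C k) x) (i : Fin m) :
    ∑ ρ ∈ univ.filter (Useful C · i), restW α ρ ≤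
      ((1 + α) / (1 - α)) ^ termWidth (C i) *
        ∑ ρ ∈ univ.filter (IsFirstForced C · i), restW α ρ := by
  set r := 2 * α / (1 - α)
  set V := univ.filter fun v => C i v ≠ none
  have hr : 0 ≤ r := div_nonneg (by linarith) (by linarith)
  have hmaps : (univ.filter (Useful C · i)).image (fun ρ => (extendBy ρ (C i), newVars ρ (C i)))
      ⊆ univ.filter (IsFirstForced C · i) ×ˢ V.powerset := by
    simp only [subset_iff, mem_image, mem_filter, mem_univ, true_and, mem_product, mem_powerset]
    rintro _ ⟨ρ, hρ, rfl⟩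
    exact ⟨hρ.isFirstForced htot, newVars_subset⟩
  calc ∑ ρ ∈ univ.filter (Useful C · i), restW α ρ
      = ∑ ρ ∈ univ.filter (Useful C · i),
          r ^ (newVars ρ (C i)).card * restW α (extendBy ρ (C i)) :=
        sum_congr rfl fun ρ _ => restW_eq_mul_restW_extendBy hα1.ne ρ (C i)
    _ = ∑ q ∈ (univ.filter (Useful C · i)).image
          (fun ρ => (extendBy ρ (C i), newVars ρ (C i))), r ^ q.2.card * restW α q.1 :=
        (sum_image (f := fun q => r ^ q.2.card * restW α q.1)
          fun ρ _ ρ' _ h => extendBy_newVars_injective (C i) h).symm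
    _ ≤ ∑ q ∈ univ.filter (IsFirstForced C · i) ×ˢ V.powerset, r ^ q.2.card * restW α q.1 :=
        sum_le_sum_of_subset_of_nonneg hmaps fun q _ _ =>
          mul_nonneg (pow_nonneg hr _) (restW_nonneg hα0 hα1.le _)
    _ = (∑ S ∈ V.powerset, r ^ S.card) * ∑ ρ ∈ univ.filter (IsFirstForced C · i), restW α ρ := by
        rw [sum_product, sum_mul_sum, sum_comm]
    _ = ((1 + α) / (1 - α)) ^ termWidth (C i) *
          ∑ ρ ∈ univ.filter (IsFirstForced C · i), restW α ρ := by
        have h := sum_pow_mul_eq_add_pow r 1 V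
        simp only [one_pow, mul_one] at h
        rw [h, show r + 1 = (1 + α) / (1 - α) by
          simp only [r]; field_simp [sub_ne_zero.2 hα1.ne']; ring]
        rfl

theorem sum_sum_restW_isFirstForced_le {α : ℝ} (hα0 : 0 ≤ α) (hα1 : α ≤ 1)
    (C : Fin m → Term n) :
    ∑ i, ∑ ρ ∈ univ.filter (IsFirstForced C · i), restW α ρ ≤ 1 := by
  rw [← sum_biUnion]
  · exact (sum_le_sum_of_subset_of_nonneg (subset_univ _) fun ρ _ _ =>
      restW_nonneg hα0 hα1 ρ).trans_eq (sum_restW α)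
  · intro i _ j _ hij
    refine disjoint_filter.2 fun ρ _ hi hj => ?_
    rcases lt_or_gt_of_ne hij with h | h
    · exact hj.2 i h hi.1
    · exact hi.2 j h hj.1

theorem sum_qL_le {α : ℝ} {w : ℕ} (hα0 : 0 ≤ α) (hα1 : α < 1) {C : Fin m → Term n}
    (htot : ∀ x, ∃ k, TermSat (C k) x) (hw : ∀ j, termWidth (C j) ≤ w) :
    ∑ i, qL C α i ≤ ((1 + α) / (1 - α)) ^ w := by
  have hbase : 1 ≤ (1 + α) / (1 - α) := by rw [le_div_iff₀ (by linarith)]; linarith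
  have hq (i : Fin m) : qL C α i = ∑ ρ ∈ univ.filter (Useful C · i), restW α ρ := by
    simp [qL, sum_filter]
  calc ∑ i, qL C α i
      ≤ ∑ i, ((1 + α) / (1 - α)) ^ w * ∑ ρ ∈ univ.filter (IsFirstForced C · i), restW α ρ :=
        sum_le_sum fun i _ => (hq i ▸ sum_restW_useful_le hα0 hα1 htot i).trans <|
          mul_le_mul_of_nonneg_right (pow_le_pow_right₀ hbase (hw i))
            (sum_nonneg fun ρ _ => restW_nonneg hα0 hα1.le ρ)
    _ ≤ ((1 + α) / (1 - α)) ^ w * 1 := by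
        rw [← mul_sum]
        exact mul_le_mul_of_nonneg_left (sum_sum_restW_isFirstForced_le hα0 hα1.le C)
          (by positivity)
    _ = ((1 + α) / (1 - α)) ^ w := mul_one _

end Encoding

theorem sum_pL_rpow_le {n m w : ℕ} {β : ℝ} (hβ : 0 < β) (hβ1 : β ≤ 1) {C : Fin m → Term n}
    (htot : ∀ x, ∃ k, TermSat (C k) x) (hw : ∀ j, termWidth (C j) ≤ w) :
    ∑ i : Fin m, pL C i ^ (2 * β / (1 + β)) ≤ (4 / β) ^ w :=
  calc ∑ i : Fin m, pL C i ^ (2 * β / (1 + β)) ≤ ∑ i, qL C (1 - β) i :=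
        sum_le_sum fun i _ => pL_rpow_le_qL hβ hβ1 C i
    _ ≤ ((1 + (1 - β)) / (1 - (1 - β))) ^ w := sum_qL_le (by linarith) (by linarith) htot hw
    _ ≤ (4 / β) ^ w := by
        rw [sub_sub_cancel]
        exact pow_le_pow_left₀ (div_nonneg (by linarith) hβ.le)
          (div_le_div_of_nonneg_right (by linarith) hβ.le) w

theorem tail_hit_probability_general {n m w : ℕ} (C : Fin m → Term n)
    (hw : ∀ j, termWidth (C j) ≤ w)
    (hm : 0 < m) (hlast : C ⟨m - 1, Nat.sub_lt hm one_pos⟩ = fun _ => none)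
    (j : Fin m → Fin m) (hjbij : Function.Bijective j)
    (hsort : ∀ a b : Fin m, a ≤ b → pL C (j b).val ≤ pL C (j a).val)
    (β ε : ℝ) (hβ0 : 0 < β) (hβ2 : β ≤ 1 / 2) (hε : 0 < ε)
    (t : ℕ) (ht : 4 * (1 / ε) ^ (4 * β) * (4 / β) ^ (3 * w) ≤ (t : ℝ)) :
    ∑ k ∈ Finset.univ.filter (fun k : Fin m => t ≤ k.val), pL C (j k).val ≤ ε := by
  rcases le_or_gt ε 1 with hε1 | hε1
  swap
  · calc _ ≤ ∑ k, pL C (j k) :=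
          sum_le_sum_of_subset_of_nonneg (subset_univ _) fun k _ _ => pL_nonneg C _
      _ = ∑ i : Fin m, pL C i := hjbij.sum_comp fun i => pL C i
      _ ≤ ε := (sum_pL_le_one C).trans hε1.le
  set c := (1 + β) / (2 * β) with hc
  have htot (x : Fin n → Bool) : ∃ k, TermSat (C k) x :=
    ⟨_, by rw [hlast]; intro v b h; cases h⟩
  have hroot : ∑ k, pL C (j k) ^ c⁻¹ ≤ (4 / β) ^ w := by
    rw [hjbij.sum_comp fun i => pL C i ^ c⁻¹, hc, inv_div]
    exact sum_pL_rpow_le hβ0 (by linarith) htot hw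
  have ht0 : 0 < t := by exact_mod_cast (by positivity : (0 : ℝ) < _).trans_le ht
  calc _ ≤ ((4 / β) ^ w) ^ c * ((t : ℝ) ^ (1 - c) / (c - 1)) :=
        sum_tail_le_of_sum_rpow_le (by rw [hc, lt_div_iff₀ (by positivity)]; linarith) ht0
          hsort (fun k => pL_nonneg C _) hroot
    _ ≤ ε := rpow_mul_tail_le_of_threshold hβ0 hβ2 hε hε1 hc ht

theorem tail_hit_probability {n m w : ℕ} (C : Fin m → Term n)
    (hw1 : 1 ≤ w) (hw : ∀ j, termWidth (C j) ≤ w)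
    (hm : 0 < m) (hlast : C ⟨m - 1, Nat.sub_lt hm one_pos⟩ = fun _ => none)
    (huseful : ∀ i : Fin m, ∃ x, DLind C x = i.val)
    (j : Fin m → Fin m) (hjbij : Function.Bijective j)
    (hsort : ∀ a b : Fin m, a ≤ b → pL C (j b).val ≤ pL C (j a).val)
    (β ε : ℝ) (hβ0 : 0 < β) (hβ2 : β ≤ 1 / 2) (hε : 0 < ε)
    (t : ℕ) (ht : 4 * (1 / ε) ^ (4 * β) * (4 / β) ^ (3 * w) ≤ (t : ℝ)) :
    ∑ k ∈ Finset.univ.filter (fun k : Fin m => t ≤ k.val), pL C (j k).val ≤ ε :=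
  tail_hit_probability_general C hw hm hlast j hjbij hsort β ε hβ0 hβ2 hε t ht
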